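/- arXiv:1810.04210 — 4 statements merged into one kernel-verified Lean document; each statement's English description precedes it below -/
import Mathlib

section
/- Assume that f is injective. If B ∈ 𝓑 satisfies 0 < μ(B) < ∞ and liminf_{k→∞} μ(f^{-k}(B)) = 0, then for every δ > 0 there exists a forward weakly wandering set W ⊆ B for f such that μ(B \ W) < δ. -/
open MeasureTheory Filter Set Topology
open scoped ENNReal

noncomputable section

/-- A continuous self-map `g` of a metric space is *Li-Yorke chaotic* if there is an
uncountable set `S` (a scrambled set) such that every pair of distinct points `x, y ∈ S`
satisfies `liminf dist (gⁿ x) (gⁿ y) = 0` and `limsup dist (gⁿ x) (gⁿ y) > 0`. -/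
def LiYorkeChaotic {M : Type*} [PseudoMetricSpace M] (g : M → M) : Prop :=
  ∃ S : Set M, ¬ S.Countable ∧ ∀ x ∈ S, ∀ y ∈ S, x ≠ y →
    (∀ ε > 0, ∃ᶠ n in atTop, dist (g^[n] x) (g^[n] y) < ε) ∧
    (∃ ε > 0, ∃ᶠ n in atTop, ε < dist (g^[n] x) (g^[n] y))

/-- `W` is a *backward weakly wandering set* for `f` if there are positive integers
`k₁ < k₂ < ⋯` such that the sets `W, f^{-k₁}(W), f^{-k₂}(W), …` are pairwise disjoint.
(We encode this via an increasing sequence `k` with `k 0 = 0`.) -/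
def BackwardWeaklyWandering {X : Type*} (f : X → X) (W : Set X) : Prop :=
  ∃ k : ℕ → ℕ, StrictMono k ∧ k 0 = 0 ∧
    Pairwise fun i j => Disjoint (f^[k i] ⁻¹' W) (f^[k j] ⁻¹' W)

/-- `W` is a *forward weakly wandering set* for `f` if there are positive integers
`k₁ < k₂ < ⋯` such that the sets `W, f^{k₁}(W), f^{k₂}(W), …` are pairwise disjoint.
(We encode this via an increasing sequence `k` with `k 0 = 0`.) -/
def ForwardWeaklyWandering {X : Type*} (f : X → X) (W : Set X) : Prop :=
  ∃ k : ℕ → ℕ, StrictMono k ∧ k 0 = 0 ∧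
    Pairwise fun i j => Disjoint (f^[k i] '' W) (f^[k j] '' W)

/-!
Since `c μ(f⁻¹ S) ≤ μ(f (f⁻¹ S)) ≤ μ S`, preimages under `fᵏ` enlarge measure by at most
`c⁻ᵏ` (after replacing `c` by `min c 1`). Because `μ(f⁻ᵏ B)` is frequently arbitrarily small, we
can choose times `0 = K₀ < K₁ < ⋯` inductively so that `μ(f^{-(K_j - K_i)} B) ≤ ε_j / j` for all
`i < j`, where `∑ ε_j < δ`: given `K_j`, take `K_{j+1} = K_j + m` with `μ(f⁻ᵐ B)` smaller than
`c^{K_j} ε_{j+1} / (j+1)`. Removing from `B` all the sets `f^{-(K_j - K_i)} B` costs less than `δ`,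
and by injectivity the remaining set `W` has pairwise disjoint images `f^{K_j} W`.
-/

section Measure

variable {X : Type*} [MeasurableSpace X] {μ : Measure X} {f : X → X}

theorem measure_preimage_le_inv_mul {c : ℝ≥0∞} (hf : Measurable f) (hc : c ≠ 0) (hc_top : c ≠ ∞)
    (hcf : ∀ B : Set X, MeasurableSet B → c * μ B ≤ μ (f '' B)) {S : Set X}
    (hS : MeasurableSet S) : μ (f ⁻¹' S) ≤ c⁻¹ * μ S :=
  (ENNReal.mul_le_iff_le_inv hc hc_top).mp <|
    (hcf _ (hf hS)).trans (measure_mono (image_preimage_subset f S))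

theorem measure_preimage_iterate_le_pow_mul {C : ℝ≥0∞} (hf : Measurable f)
    (hC : ∀ S : Set X, MeasurableSet S → μ (f ⁻¹' S) ≤ C * μ S) (n : ℕ) {S : Set X}
    (hS : MeasurableSet S) : μ (f^[n] ⁻¹' S) ≤ C ^ n * μ S := by
  induction n generalizing S with
  | zero => simp
  | succ n ih =>
    calc μ (f^[n + 1] ⁻¹' S) = μ (f^[n] ⁻¹' (f ⁻¹' S)) := by
          rw [Function.iterate_succ', preimage_comp]
      _ ≤ C ^ n * μ (f ⁻¹' S) := ih (hf hS)
      _ ≤ C ^ n * (C * μ S) := by gcongr; exact hC S hS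
      _ = C ^ (n + 1) * μ S := by rw [pow_succ, mul_assoc]

theorem measure_iUnion_biUnion_range_le_tsum {s : ℕ → ℕ → Set X} {ε : ℕ → ℝ≥0∞}
    (h : ∀ i j, i < j → μ (s i j) ≤ ε j / j) :
    μ (⋃ j, ⋃ i ∈ Finset.range j, s i j) ≤ ∑' j, ε j := by
  refine (measure_iUnion_le _).trans (ENNReal.tsum_le_tsum fun j => ?_)
  calc μ (⋃ i ∈ Finset.range j, s i j) ≤ ∑ i ∈ Finset.range j, μ (s i j) :=
        measure_biUnion_finset_le _ _
    _ ≤ ∑ _i ∈ Finset.range j, ε j / j :=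
        Finset.sum_le_sum fun i hi => h i j (Finset.mem_range.mp hi)
    _ = j * (ε j / j) := by rw [Finset.sum_const, Finset.card_range, nsmul_eq_mul]
    _ ≤ ε j := ENNReal.mul_div_le

end Measure

theorem exists_strictMono_le_of_liminf_eq_zero {u : ℕ → ℝ≥0∞} {C : ℝ≥0∞} (hC1 : 1 ≤ C)
    (hC : C ≠ ∞) (hu : ∀ a m, u (a + m) ≤ C ^ a * u m) (h : liminf u atTop = 0)
    {ε : ℕ → ℝ≥0∞} (hε : ∀ j, 0 < ε j) :
    ∃ K : ℕ → ℕ, StrictMono K ∧ K 0 = 0 ∧ ∀ i j, i < j → u (K j - K i) ≤ ε j := by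
  have hsmall : ∀ j n, ∃ m, 1 ≤ m ∧ u m < C⁻¹ ^ n * ε j := fun j n => by
    have hpos : 0 < C⁻¹ ^ n * ε j :=
      ENNReal.mul_pos (pow_ne_zero _ (ENNReal.inv_ne_zero.2 hC)) (hε j).ne'
    exact frequently_atTop.mp (frequently_lt_of_liminf_lt (by isBoundedDefault) (h ▸ hpos)) 1
  choose m hm1 hmu using hsmall
  let K : ℕ → ℕ := fun n => Nat.rec 0 (fun j Kj => Kj + m (j + 1) Kj) n
  have hK_succ : ∀ j, K (j + 1) = K j + m (j + 1) (K j) := fun _ => rfl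
  have hK : StrictMono K := strictMono_nat_of_lt_succ fun j => by
    have := hm1 (j + 1) (K j); rw [hK_succ]; omega
  refine ⟨K, hK, rfl, fun i j hij => ?_⟩
  obtain ⟨j, rfl⟩ : ∃ j', j = j' + 1 := Nat.exists_eq_add_one_of_ne_zero (by omega)
  have hKi : K i ≤ K j := hK.monotone (by omega)
  calc u (K (j + 1) - K i) = u ((K j - K i) + m (j + 1) (K j)) := by rw [hK_succ]; congr 1; omega
    _ ≤ C ^ (K j - K i) * u (m (j + 1) (K j)) := hu _ _
    _ ≤ C ^ K j * (C⁻¹ ^ K j * ε (j + 1)) :=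
        mul_le_mul' (pow_le_pow_right₀ hC1 (Nat.sub_le _ _)) (hmu _ _).le
    _ = ε (j + 1) := by
        rw [← mul_assoc, ← mul_pow, ENNReal.mul_inv_cancel (by positivity) hC, one_pow, one_mul]

section Wandering

variable {X : Type*} {f : X → X}

theorem Function.Injective.disjoint_image_iterate (hf : Function.Injective f) {W : Set X}
    {m n : ℕ} (hmn : m ≤ n) (hW : Disjoint W (f^[n - m] ⁻¹' W)) :
    Disjoint (f^[m] '' W) (f^[n] '' W) := by
  rw [← Nat.add_sub_cancel' hmn, Function.iterate_add, image_comp,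
    disjoint_image_iff (hf.iterate m), disjoint_comm, disjoint_image_left]
  exact hW

theorem forwardWeaklyWandering_of_disjoint_preimage (hf : Function.Injective f) {K : ℕ → ℕ}
    (hK : StrictMono K) (hK0 : K 0 = 0) {W : Set X}
    (hW : ∀ i j, i < j → Disjoint W (f^[K j - K i] ⁻¹' W)) : ForwardWeaklyWandering f W := by
  refine ⟨K, hK, hK0, fun i j hij => ?_⟩
  rcases hij.lt_or_gt with hlt | hlt
  · exact hf.disjoint_image_iterate (hK hlt).le (hW i j hlt)
  · exact (hf.disjoint_image_iterate (hK hlt).le (hW j i hlt)).symm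

end Wandering

theorem exists_forwardWeaklyWandering_diff_lt_general
    {X : Type*} [MeasurableSpace X] (μ : Measure X)
    (f : X → X) (hf : Measurable f)
    (c : ℝ≥0∞) (hc : 0 < c)
    (hcf : ∀ B : Set X, MeasurableSet B → c * μ B ≤ μ (f '' B))
    (hinj : Function.Injective f)
    (B : Set X) (hB : MeasurableSet B)
    (h : atTop.liminf (fun k : ℕ => μ (f^[k] ⁻¹' B)) = 0) :
    ∀ δ : ℝ≥0∞, 0 < δ →
      ∃ W : Set X, W ⊆ B ∧ MeasurableSet W ∧ μ (B \ W) < δ ∧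
        ForwardWeaklyWandering f W := by
  intro δ hδ
  have hc₁ : min c 1 ≠ 0 := (lt_min hc one_pos).ne'
  have hc₁_top : min c 1 ≠ ∞ := ((min_le_right c 1).trans_lt ENNReal.one_lt_top).ne
  have hpre : ∀ S, MeasurableSet S → μ (f ⁻¹' S) ≤ (min c 1)⁻¹ * μ S := fun _ hS =>
    measure_preimage_le_inv_mul hf hc₁ hc₁_top
      (fun A hA => (mul_le_mul_left (min_le_left c 1) _).trans (hcf A hA)) hS
  have hu : ∀ a m, μ (f^[a + m] ⁻¹' B) ≤ (min c 1)⁻¹ ^ a * μ (f^[m] ⁻¹' B) := fun a m => by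
    rw [add_comm, Function.iterate_add, preimage_comp]
    exact measure_preimage_iterate_le_pow_mul hf hpre a (hf.iterate m hB)
  obtain ⟨ε, hε0, hεδ⟩ := ENNReal.exists_pos_sum_of_countable' hδ.ne' ℕ
  obtain ⟨K, hK, hK0, hKε⟩ := exists_strictMono_le_of_liminf_eq_zero
    (ENNReal.one_le_inv.2 (min_le_right c 1)) (ENNReal.inv_ne_top.2 hc₁) hu h
    (ε := fun j => ε j / j) fun j => ENNReal.div_pos (hε0 j).ne' (ENNReal.natCast_ne_top j)
  set Bad := ⋃ j, ⋃ i ∈ Finset.range j, f^[K j - K i] ⁻¹' B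
  have hBad : MeasurableSet Bad := .iUnion fun j => .biUnion (Finset.range j).countable_toSet
    fun i _ => hf.iterate _ hB
  refine ⟨B \ Bad, sdiff_subset, hB.diff hBad, ?_,
    forwardWeaklyWandering_of_disjoint_preimage hinj hK hK0 fun i j hij => ?_⟩
  · calc μ (B \ (B \ Bad)) ≤ μ Bad :=
        measure_mono fun x hx => by_contra fun hx' => hx.2 ⟨hx.1, hx'⟩
      _ ≤ ∑' j, ε j := measure_iUnion_biUnion_range_le_tsum hKε
      _ < δ := hεδ
  · exact disjoint_left.2 fun w hw hw' =>
      hw.2 (mem_iUnion.2 ⟨j, mem_iUnion₂.2 ⟨i, Finset.mem_range.2 hij, hw'.1⟩⟩)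

/-- **Remark (refinement of Lemma 2).** Assume `f` injective. If `B` is measurable with
`0 < μ(B) < ∞` and `liminf_{k → ∞} μ(f^{-k}(B)) = 0`, then for every `δ > 0` there is a
forward weakly wandering set `W ⊆ B` for `f` with `μ(B \ W) < δ`. -/
theorem exists_forwardWeaklyWandering_diff_lt
    {X : Type*} [MeasurableSpace X] (μ : Measure X) (hX : μ Set.univ ≠ 0)
    (f : X → X) (hf : Measurable f)
    (hfim : ∀ B : Set X, MeasurableSet B → MeasurableSet (f '' B))
    (c : ℝ≥0∞) (hc : 0 < c)
    (hcf : ∀ B : Set X, MeasurableSet B → c * μ B ≤ μ (f '' B))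
    (hinj : Function.Injective f)
    (B : Set X) (hB : MeasurableSet B) (hB0 : 0 < μ B) (hBfin : μ B < ∞)
    (h : atTop.liminf (fun k : ℕ => μ (f^[k] ⁻¹' B)) = 0) :
    ∀ δ : ℝ≥0∞, 0 < δ →
      ∃ W : Set X, W ⊆ B ∧ MeasurableSet W ∧ μ (B \ W) < δ ∧
        ForwardWeaklyWandering f W :=
  exists_forwardWeaklyWandering_diff_lt_general μ f hf c hc hcf hinj B hB h
end
end

section
/- If there exists B ∈ 𝓑 with 0 < μ(B) < ∞ such that liminf_{n→∞} μ(f^{-n}(B)) = 0 and limsup_{n→∞} μ(f^{-n}(B)) > 0, then the characteristic function χ_B ∈ L^p(X,𝓑,μ) satisfies ‖T_f^n χ_B‖^p = μ(f^{-n}(B)) for all n, is a semi-irregular vector for T_f, and consequently T_f is Li-Yorke chaotic. -/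
open MeasureTheory Filter Set Topology
open scoped ENNReal

noncomputable section

/-! Since `T` is linear, `dist (Tⁿ (t • y)) (Tⁿ (s • y)) = ‖Tⁿ ((t - s) • y)‖`, so the line
through a semi-irregular vector `y` is a scrambled set. Semi-irregularity of the indicator
`χ_B` is read off from `‖T_fⁿ χ_B‖ₑ ^ p = μ (f^{-n} B)`, which holds because the lower bound
`c * μ B ≤ μ (f '' B)` makes `f` nonsingular, so composition with `f` respects a.e. classes. -/

section SemiIrregular

variable {𝕜 E : Type*} [NontriviallyNormedField 𝕜] [NormedAddCommGroup E] [NormedSpace 𝕜 E]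

def IsSemiIrregular (T : E →L[𝕜] E) (y : E) : Prop :=
  (∀ ε > (0 : ℝ), ∃ᶠ n in atTop, ‖(T ^ n) y‖ < ε) ∧
    (∃ ε > (0 : ℝ), ∃ᶠ n in atTop, ε < ‖(T ^ n) y‖)

variable {T : E →L[𝕜] E} {y : E}

theorem IsSemiIrregular.ne_zero (hy : IsSemiIrregular T y) : y ≠ 0 := by
  rintro rfl
  obtain ⟨ε, hε, hfreq⟩ := hy.2
  obtain ⟨n, hn⟩ := hfreq.exists
  simp only [map_zero, norm_zero] at hn
  exact hε.not_gt hn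

theorem IsSemiIrregular.smul (hy : IsSemiIrregular T y) {c : 𝕜} (hc : c ≠ 0) :
    IsSemiIrregular T (c • y) := by
  have hc' : 0 < ‖c‖ := norm_pos_iff.2 hc
  have hnorm (n : ℕ) : ‖(T ^ n) (c • y)‖ = ‖c‖ * ‖(T ^ n) y‖ := by
    rw [map_smul, norm_smul]
  refine ⟨fun ε hε => ?_, ?_⟩
  · refine (hy.1 (ε / ‖c‖) (by positivity)).mono fun n hn => ?_
    rwa [hnorm, ← lt_div_iff₀' hc']
  · obtain ⟨ε, hε, hfreq⟩ := hy.2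
    exact ⟨‖c‖ * ε, by positivity, hfreq.mono fun n hn => by rw [hnorm]; gcongr⟩

theorem liYorkeChaotic_of_isSemiIrregular [Uncountable 𝕜] (hy : IsSemiIrregular T y) :
    LiYorkeChaotic ⇑T := by
  refine ⟨range fun t : 𝕜 => t • y, fun hS => ?_, ?_⟩
  · have := hS.preimage (smul_left_injective 𝕜 hy.ne_zero)
    rw [preimage_range] at this
    exact not_countable_univ this
  · rintro _ ⟨t, rfl⟩ _ ⟨s, rfl⟩ hne
    have hts : t - s ≠ 0 := sub_ne_zero.2 fun h => hne (by rw [h])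
    have hdist (n : ℕ) : dist ((⇑T)^[n] (t • y)) ((⇑T)^[n] (s • y)) = ‖(T ^ n) ((t - s) • y)‖ := by
      rw [← FunLike.coe_pow_eq_iterate, dist_eq_norm, ← map_sub, sub_smul]
    simp only [hdist]
    exact hy.smul hts

end SemiIrregular

section Enorm

variable {ι E : Type*} [SeminormedAddGroup E] {l : Filter ι} {x : ι → E} {q : ℝ}

theorem frequently_norm_lt_of_liminf_enorm_rpow_eq_zero (hq : 0 < q)
    (h : liminf (fun i => ‖x i‖ₑ ^ q) l = 0) : ∀ ε > (0 : ℝ), ∃ᶠ i in l, ‖x i‖ < ε := by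
  intro ε hε
  have hpos : 0 < ENNReal.ofReal ε ^ q :=
    ENNReal.rpow_pos (ENNReal.ofReal_pos.2 hε) ENNReal.ofReal_ne_top
  refine (frequently_lt_of_liminf_lt (by isBoundedDefault) (h.trans_lt hpos)).mono fun i hi => ?_
  rwa [ENNReal.rpow_lt_rpow_iff hq, ← ofReal_norm,
    ENNReal.ofReal_lt_ofReal_iff hε] at hi

theorem exists_frequently_lt_norm_of_limsup_enorm_rpow_pos (hq : 0 < q)
    (h : 0 < limsup (fun i => ‖x i‖ₑ ^ q) l) : ∃ ε > (0 : ℝ), ∃ᶠ i in l, ε < ‖x i‖ := by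
  obtain ⟨a, ha0, hal⟩ := exists_between h
  have hfreq : ∃ᶠ i in l, a < ‖x i‖ₑ ^ q :=
    frequently_lt_of_lt_limsup (by isBoundedDefault) hal
  refine ⟨(a ^ q⁻¹).toReal, ENNReal.toReal_pos ?_ ?_, hfreq.mono fun i hi => ?_⟩
  · exact (ENNReal.rpow_pos ha0 hal.ne_top).ne'
  · exact ENNReal.rpow_ne_top_of_nonneg (inv_nonneg.2 hq.le) hal.ne_top
  · rw [← ENNReal.rpow_inv_lt_iff hq, ← ofReal_norm] at hi
    exact ENNReal.toReal_lt_of_lt_ofReal hi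

end Enorm

section CompositionOperator

variable {X : Type*} [MeasurableSpace X] {μ : Measure X} {f : X → X}

theorem quasiMeasurePreserving_of_mul_le_measure_image {Y : Type*} [MeasurableSpace Y]
    {ν : Measure Y} {g : X → Y} (hg : Measurable g) {c : ℝ≥0∞} (hc : c ≠ 0)
    (hcg : ∀ B : Set X, MeasurableSet B → c * μ B ≤ ν (g '' B)) :
    Measure.QuasiMeasurePreserving g μ ν := by
  refine ⟨hg, Measure.AbsolutelyContinuous.mk fun s hs hs0 => ?_⟩
  rw [Measure.map_apply hg hs]
  have : c * μ (g ⁻¹' s) = 0 := le_antisymm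
    ((hcg _ (hg hs)).trans ((measure_mono (image_preimage_subset g s)).trans_eq hs0)) bot_le
  exact (mul_eq_zero.1 this).resolve_left hc

variable {𝕜 E : Type*} [NormedField 𝕜] [NormedAddCommGroup E] [NormedSpace 𝕜 E]
  {p : ℝ≥0∞} [Fact (1 ≤ p)]

theorem coeFn_pow_apply_ae_eq_comp_iterate (hf : Measure.QuasiMeasurePreserving f μ μ)
    {T : Lp E p μ →L[𝕜] Lp E p μ} (hT : ∀ φ : Lp E p μ, ⇑(T φ) =ᵐ[μ] fun x => φ (f x))
    (n : ℕ) (φ : Lp E p μ) : ⇑((T ^ n) φ) =ᵐ[μ] fun x => φ (f^[n] x) := by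
  induction n with
  | zero => rfl
  | succ n ih =>
    rw [pow_succ', mul_apply_eq_comp]
    exact (hT _).trans (hf.ae_eq ih)

theorem enorm_pow_indicatorConstLp_rpow (hf : Measure.QuasiMeasurePreserving f μ μ)
    {T : Lp ℝ p μ →L[ℝ] Lp ℝ p μ} (hT : ∀ φ : Lp ℝ p μ, ⇑(T φ) =ᵐ[μ] fun x => φ (f x))
    (hp : p ≠ ∞) {B : Set X} (hB : MeasurableSet B) (hBfin : μ B ≠ ∞) (n : ℕ) :
    ‖(T ^ n) (indicatorConstLp p hB hBfin (1 : ℝ))‖ₑ ^ p.toReal = μ (f^[n] ⁻¹' B) := by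
  have hp0 : p ≠ 0 := (zero_lt_one.trans_le Fact.out).ne'
  have hcoe : ⇑((T ^ n) (indicatorConstLp p hB hBfin (1 : ℝ))) =ᵐ[μ]
      (f^[n] ⁻¹' B).indicator fun _ => (1 : ℝ) :=
    (coeFn_pow_apply_ae_eq_comp_iterate hf hT n _).trans
      ((hf.iterate n).ae_eq indicatorConstLp_coeFn)
  rw [Lp.enorm_def, eLpNorm_congr_ae hcoe, eLpNorm_indicator_const (hf.measurable.iterate n hB)
    hp0 hp, enorm_one, one_mul, ← ENNReal.rpow_mul, one_div_mul_cancel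
    (ENNReal.toReal_pos hp0 hp).ne', ENNReal.rpow_one]

end CompositionOperator

theorem indicator_semiIrregular_of_liminf_limsup_general
    {X : Type*} [MeasurableSpace X] (μ : Measure X)
    (p : ℝ≥0∞) [Fact (1 ≤ p)] (hp : p ≠ ∞)
    (f : X → X) (hf : Measurable f)
    (c : ℝ≥0∞) (hc : 0 < c)
    (hcf : ∀ B : Set X, MeasurableSet B → c * μ B ≤ μ (f '' B))
    (T : Lp ℝ p μ →L[ℝ] Lp ℝ p μ)
    (hT : ∀ φ : Lp ℝ p μ, ⇑(T φ) =ᵐ[μ] fun x => φ (f x))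
    (B : Set X) (hB : MeasurableSet B) (hBfin : μ B ≠ ∞)
    (hlinf : atTop.liminf (fun n : ℕ => μ (f^[n] ⁻¹' B)) = 0)
    (hlsup : 0 < atTop.limsup (fun n : ℕ => μ (f^[n] ⁻¹' B))) :
    (∀ n : ℕ, ‖(T ^ n) (indicatorConstLp p hB hBfin (1 : ℝ))‖ ^ p.toReal
        = (μ (f^[n] ⁻¹' B)).toReal) ∧
    ((∀ ε > (0 : ℝ), ∃ᶠ n in atTop,
        ‖(T ^ n) (indicatorConstLp p hB hBfin (1 : ℝ))‖ < ε) ∧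
      (∃ ε > (0 : ℝ), ∃ᶠ n in atTop,
        ε < ‖(T ^ n) (indicatorConstLp p hB hBfin (1 : ℝ))‖)) ∧
    LiYorkeChaotic (⇑T) := by
  have hq : 0 < p.toReal := ENNReal.toReal_pos (zero_lt_one.trans_le Fact.out).ne' hp
  have hnorm := enorm_pow_indicatorConstLp_rpow
    (quasiMeasurePreserving_of_mul_le_measure_image hf hc.ne' hcf) hT hp hB hBfin
  have hsemi : IsSemiIrregular T (indicatorConstLp p hB hBfin (1 : ℝ)) :=
    ⟨frequently_norm_lt_of_liminf_enorm_rpow_eq_zero hq (by simpa only [hnorm] using hlinf),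
      exists_frequently_lt_norm_of_limsup_enorm_rpow_pos hq (by simpa only [hnorm] using hlsup)⟩
  refine ⟨fun n => ?_, hsemi, liYorkeChaotic_of_isSemiIrregular hsemi⟩
  rw [← toReal_enorm, ENNReal.toReal_rpow, hnorm]

/-- **(LY6) ⇒ (LY7) ⇒ (LY1).** If there is a measurable `B` with `0 < μ(B) < ∞`,
`liminf μ(f^{-n}(B)) = 0` and `limsup μ(f^{-n}(B)) > 0`, then the characteristic function
`χ_B ∈ L^p` satisfies `‖T_f^n χ_B‖^p = μ(f^{-n}(B))` for all `n`, is a semi-irregular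
vector for `T_f`, and consequently `T_f` is Li-Yorke chaotic. -/
theorem indicator_semiIrregular_of_liminf_limsup
    {X : Type*} [MeasurableSpace X] (μ : Measure X) (hX : μ Set.univ ≠ 0)
    (p : ℝ≥0∞) [Fact (1 ≤ p)] (hp : p ≠ ∞)
    (f : X → X) (hf : Measurable f)
    (hfim : ∀ B : Set X, MeasurableSet B → MeasurableSet (f '' B))
    (c : ℝ≥0∞) (hc : 0 < c)
    (hcf : ∀ B : Set X, MeasurableSet B → c * μ B ≤ μ (f '' B))
    (T : Lp ℝ p μ →L[ℝ] Lp ℝ p μ)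
    (hT : ∀ φ : Lp ℝ p μ, ⇑(T φ) =ᵐ[μ] fun x => φ (f x))
    (B : Set X) (hB : MeasurableSet B) (hB0 : 0 < μ B) (hBfin : μ B ≠ ∞)
    (hlinf : atTop.liminf (fun n : ℕ => μ (f^[n] ⁻¹' B)) = 0)
    (hlsup : 0 < atTop.limsup (fun n : ℕ => μ (f^[n] ⁻¹' B))) :
    (∀ n : ℕ, ‖(T ^ n) (indicatorConstLp p hB hBfin (1 : ℝ))‖ ^ p.toReal
        = (μ (f^[n] ⁻¹' B)).toReal) ∧
    ((∀ ε > (0 : ℝ), ∃ᶠ n in atTop,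
        ‖(T ^ n) (indicatorConstLp p hB hBfin (1 : ℝ))‖ < ε) ∧
      (∃ ε > (0 : ℝ), ∃ᶠ n in atTop,
        ε < ‖(T ^ n) (indicatorConstLp p hB hBfin (1 : ℝ))‖)) ∧
    LiYorkeChaotic (⇑T) :=
  indicator_semiIrregular_of_liminf_limsup_general μ p hp f hf c hc hcf T hT B hB hBfin hlinf hlsup
end
end

section
/- Assume that μ is a finite measure and that f is injective. If there exists B ∈ 𝓑 with μ(B) > 0 and liminf_{n→∞} μ(f^{-n}(B)) = 0, then there exists a measurable set W ⊆ B with μ(W) > 0 and liminf_{n→∞} μ(f^n(W)) = 0. -/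
open MeasureTheory Filter Set Topology
open scoped ENNReal

noncomputable section

/-!
If `f^{t_k}(W)`, `k ∈ ℕ`, are pairwise disjoint, their measures are summable in a finite measure
space, so `μ(f^{t_k}(W)) → 0`. By injectivity, `f^{t_i}(W)` and `f^{t_k}(W)` are disjoint as soon
as `W` misses `f^{-(t_k - t_i)}(B)`, so it suffices to find times `t_0 < t_1 < ⋯` such that the
sets `f^{-(t_k - t_i)}(B)`, `i < k`, have total measure less than `μ(B)`, and to remove them
from `B`. Since `μ(f^{-1}(S)) ≤ c⁻¹ μ(S)`, a single time `m` with `μ(f^{-m}(B))` small makes the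
whole block `f^{-(m+d)}(B)`, `d ≤ T`, small; taking `t_{k+1} = t_k + m` with `T = t_k` covers
all differences `t_{k+1} - t_i`.
-/

theorem disjoint_image_iterate_of_disjoint_preimage {X : Type*} {f : X → X}
    (hinj : Function.Injective f) {W : Set X}
    {m n : ℕ} (hmn : m ≤ n) (h : Disjoint W (f^[n - m] ⁻¹' W)) :
    Disjoint (f^[m] '' W) (f^[n] '' W) := by
  rw [← Nat.add_sub_cancel' hmn, Function.iterate_add, image_comp,
    disjoint_image_iff (hinj.iterate m), disjoint_image_right]
  exact h.symm

section

variable {X : Type*} [MeasurableSpace X] {μ : Measure X} {f : X → X}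

theorem exists_strictMono_measure_biUnion_lt {A : ℕ → Set X}
    (hA : ∀ T : ℕ, ∀ δ > 0, ∃ᶠ m in atTop, μ (⋃ d ∈ Finset.range (T + 1), A (m + d)) < δ)
    {ε : ℕ → ℝ≥0∞} (hε : ∀ k, 0 < ε k) :
    ∃ t : ℕ → ℕ, StrictMono t ∧ ∀ k, μ (⋃ i ∈ Finset.range k, A (t k - t i)) < ε k := by
  have hstep (k T : ℕ) :
      ∃ m, 0 < m ∧ μ (⋃ d ∈ Finset.range (T + 1), A (m + d)) < ε (k + 1) :=
    ((hA T _ (hε (k + 1))).and_eventually (eventually_gt_atTop 0)).exists.imp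
      fun _ hm => hm.symm
  choose m hm_pos hm using hstep
  let t : ℕ → ℕ := fun k => Nat.rec 0 (fun k tk => tk + m k tk) k
  have ht_succ (k : ℕ) : t (k + 1) = t k + m k (t k) := rfl
  have ht : StrictMono t :=
    strictMono_nat_of_lt_succ fun k => by rw [ht_succ]; exact Nat.lt_add_of_pos_right (hm_pos _ _)
  refine ⟨t, ht, fun k => ?_⟩
  cases k with
  | zero => simpa using hε 0
  | succ k =>
    have hcover : ⋃ i ∈ Finset.range (k + 1), A (t (k + 1) - t i) ⊆
        ⋃ d ∈ Finset.range (t k + 1), A (m k (t k) + d) := by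
      refine iUnion₂_subset fun i hi => ?_
      have hti : t i ≤ t k := ht.monotone (Nat.lt_succ_iff.1 (Finset.mem_range.1 hi))
      have hdiff : t (k + 1) - t i = m k (t k) + (t k - t i) := by rw [ht_succ]; omega
      rw [hdiff]
      exact subset_biUnion_of_mem (u := fun d => A (m k (t k) + d))
        (Finset.mem_coe.2 (Finset.mem_range.2 (by omega)))
    exact (measure_mono hcover).trans_lt (hm k (t k))

theorem MeasurableSet.image_iterate (hfim : ∀ s : Set X, MeasurableSet s → MeasurableSet (f '' s))
    (n : ℕ) {s : Set X} (hs : MeasurableSet s) : MeasurableSet (f^[n] '' s) := by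
  induction n with
  | zero => simpa using hs
  | succ n ih =>
    rw [Function.iterate_succ', image_comp]
    exact hfim _ ih

theorem measure_preimage_le_inv_mul_of_mul_le_measure_image [IsFiniteMeasure μ]
    (hf : Measurable f) {c : ℝ≥0∞} (hc : c ≠ 0)
    (hcf : ∀ s : Set X, MeasurableSet s → c * μ s ≤ μ (f '' s))
    {s : Set X} (hs : MeasurableSet s) : μ (f ⁻¹' s) ≤ c⁻¹ * μ s := by
  rw [← ENNReal.div_eq_inv_mul, ENNReal.le_div_iff_mul_le (.inl hc) (.inr (measure_ne_top μ s)),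
    mul_comm]
  exact (hcf _ (hf hs)).trans (measure_mono (image_preimage_subset f s))

theorem measure_preimage_iterate_le (hf : Measurable f) {K : ℝ≥0∞}
    (hK : ∀ s : Set X, MeasurableSet s → μ (f ⁻¹' s) ≤ K * μ s)
    (n : ℕ) {s : Set X} (hs : MeasurableSet s) : μ (f^[n] ⁻¹' s) ≤ K ^ n * μ s := by
  induction n with
  | zero => simp
  | succ n ih =>
    calc μ (f^[n + 1] ⁻¹' s) = μ (f ⁻¹' (f^[n] ⁻¹' s)) := by
          rw [Function.iterate_succ, preimage_comp]
      _ ≤ K * μ (f^[n] ⁻¹' s) := hK _ (hf.iterate n hs)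
      _ ≤ K * (K ^ n * μ s) := by gcongr
      _ = K ^ (n + 1) * μ s := by ring

theorem frequently_measure_biUnion_preimage_iterate_lt (hf : Measurable f) {K : ℝ≥0∞}
    (hK : ∀ s : Set X, MeasurableSet s → μ (f ⁻¹' s) ≤ K * μ s) (hK_top : K ≠ ⊤)
    {B : Set X} (hB : MeasurableSet B) (h : atTop.liminf (fun n : ℕ => μ (f^[n] ⁻¹' B)) = 0)
    (T : ℕ) {δ : ℝ≥0∞} (hδ : 0 < δ) :
    ∃ᶠ m in atTop, μ (⋃ d ∈ Finset.range (T + 1), f^[m + d] ⁻¹' B) < δ := by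
  set C := ∑ d ∈ Finset.range (T + 1), K ^ d
  have hC : C ≠ ⊤ := ENNReal.sum_ne_top.2 fun d _ => ENNReal.pow_ne_top hK_top
  have hblock (m : ℕ) :
      μ (⋃ d ∈ Finset.range (T + 1), f^[m + d] ⁻¹' B) ≤ C * μ (f^[m] ⁻¹' B) := by
    calc μ (⋃ d ∈ Finset.range (T + 1), f^[m + d] ⁻¹' B)
        ≤ ∑ d ∈ Finset.range (T + 1), μ (f^[d] ⁻¹' (f^[m] ⁻¹' B)) := by
          simp_rw [Function.iterate_add, preimage_comp]
          exact measure_biUnion_finset_le _ _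
      _ ≤ ∑ d ∈ Finset.range (T + 1), K ^ d * μ (f^[m] ⁻¹' B) := by
          gcongr with d
          exact measure_preimage_iterate_le hf hK d (hf.iterate m hB)
      _ = C * μ (f^[m] ⁻¹' B) := (Finset.sum_mul ..).symm
  have hliminf : atTop.liminf (fun m : ℕ => C * μ (f^[m] ⁻¹' B)) < δ := by
    rwa [ENNReal.liminf_const_mul_of_ne_top hC, h, mul_zero]
  exact (frequently_lt_of_liminf_lt (by isBoundedDefault) hliminf).mono
    fun m hm => (hblock m).trans_lt hm

theorem liminf_measure_eq_zero_of_pairwise_disjoint [IsFiniteMeasure μ] {s : ℕ → Set X}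
    (hs : ∀ n, MeasurableSet (s n)) {t : ℕ → ℕ} (ht : Tendsto t atTop atTop)
    (hdisj : Pairwise (Function.onFun Disjoint fun k => s (t k))) :
    atTop.liminf (fun n => μ (s n)) = 0 := by
  have hsum : ∑' k, μ (s (t k)) ≠ ⊤ := by
    rw [← measure_iUnion hdisj fun k => hs (t k)]
    exact measure_ne_top μ _
  have hlim := ENNReal.tendsto_atTop_zero_of_tsum_ne_top hsum
  exact le_antisymm (ht.liminf_le_liminf_comp.trans_eq hlim.liminf_eq) bot_le

end

theorem exists_subset_liminf_image_zero_general
    {X : Type*} [MeasurableSpace X] (μ : Measure X)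
    [IsFiniteMeasure μ]
    (f : X → X) (hf : Measurable f)
    (hfim : ∀ B : Set X, MeasurableSet B → MeasurableSet (f '' B))
    (c : ℝ≥0∞) (hc : 0 < c)
    (hcf : ∀ B : Set X, MeasurableSet B → c * μ B ≤ μ (f '' B))
    (hinj : Function.Injective f)
    (B : Set X) (hB : MeasurableSet B) (hB0 : 0 < μ B)
    (h : atTop.liminf (fun n : ℕ => μ (f^[n] ⁻¹' B)) = 0) :
    ∃ W : Set X, W ⊆ B ∧ MeasurableSet W ∧ 0 < μ W ∧
      atTop.liminf (fun n : ℕ => μ (f^[n] '' W)) = 0 := by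
  have hK : ∀ s : Set X, MeasurableSet s → μ (f ⁻¹' s) ≤ c⁻¹ * μ s := fun _ =>
    measure_preimage_le_inv_mul_of_mul_le_measure_image hf hc.ne' hcf
  obtain ⟨ε, hε, hεB⟩ := ENNReal.exists_pos_sum_of_countable' hB0.ne' ℕ
  obtain ⟨t, ht, htε⟩ := exists_strictMono_measure_biUnion_lt (A := fun n => f^[n] ⁻¹' B)
    (fun T _ hδ => frequently_measure_biUnion_preimage_iterate_lt hf hK
      (ENNReal.inv_ne_top.2 hc.ne') hB h T hδ) hε
  set W := B \ ⋃ k, ⋃ i ∈ Finset.range k, f^[t k - t i] ⁻¹' B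
  have hW : MeasurableSet W :=
    hB.diff (.iUnion fun k => .biUnion (Finset.range k).countable_toSet
      fun i _ => hf.iterate _ hB)
  have hW_pos : 0 < μ W := by
    refine (tsub_pos_of_lt ?_).trans_le (le_measure_sdiff ..)
    exact ((measure_iUnion_le _).trans (ENNReal.tsum_le_tsum fun k => (htε k).le)).trans_lt hεB
  have hdisj (i k : ℕ) (hik : i < k) : Disjoint W (f^[t k - t i] ⁻¹' W) :=
    disjoint_left.2 fun x hx hx' =>
      hx.2 (mem_iUnion.2 ⟨k, mem_iUnion₂_of_mem (Finset.mem_range.2 hik) hx'.1⟩)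
  refine ⟨W, sdiff_subset, hW, hW_pos, ?_⟩
  refine liminf_measure_eq_zero_of_pairwise_disjoint (fun n => hW.image_iterate hfim n)
    ht.tendsto_atTop ?_
  exact (pairwise_disjoint_on _).2 fun i k hik =>
    disjoint_image_iterate_of_disjoint_preimage hinj (ht hik).le (hdisj i k hik)

/-- **(LY3) ⇒ (LY4) (measure-theoretic form).** Assume `μ` finite and `f` injective.
If there is a measurable `B` with `μ(B) > 0` and `liminf μ(f^{-n}(B)) = 0`, then there is
a measurable `W ⊆ B` with `μ(W) > 0` and `liminf μ(f^n(W)) = 0`. -/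
theorem exists_subset_liminf_image_zero
    {X : Type*} [MeasurableSpace X] (μ : Measure X) (hX : μ Set.univ ≠ 0)
    [IsFiniteMeasure μ]
    (f : X → X) (hf : Measurable f)
    (hfim : ∀ B : Set X, MeasurableSet B → MeasurableSet (f '' B))
    (c : ℝ≥0∞) (hc : 0 < c)
    (hcf : ∀ B : Set X, MeasurableSet B → c * μ B ≤ μ (f '' B))
    (hinj : Function.Injective f)
    (B : Set X) (hB : MeasurableSet B) (hB0 : 0 < μ B)
    (h : atTop.liminf (fun n : ℕ => μ (f^[n] ⁻¹' B)) = 0) :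
    ∃ W : Set X, W ⊆ B ∧ MeasurableSet W ∧ 0 < μ W ∧
      atTop.liminf (fun n : ℕ => μ (f^[n] '' W)) = 0 :=
  exists_subset_liminf_image_zero_general μ f hf hfim c hc hcf hinj B hB hB0 h
end
end

section
/- Assume that μ is a finite measure. If there exists B ∈ 𝓑 with μ(B) > 0 and liminf_{n→∞} μ(f^n(B)) = 0, then there exists a measurable set W ⊆ B with μ(W) > 0 such that liminf_{n→∞} μ(f^{-n}(W)) = 0 and liminf_{n→∞} μ(f^n(W)) = 0. -/
open MeasureTheory Filter Set Topology
open scoped ENNReal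

noncomputable section

open Function

/-!
Write `a d = μ(fᵈ(B))`. Since `μ(f(A)) ≥ c μ(A)`, a small value `a N` forces `a (N - j)` to be
small for every `j ≤ N`, at the cost of a factor `c⁻ʲ`. One can therefore pick times
`n₀ < n₁ < ⋯` so quickly that the sets `f^{n_k - n_j}(B)`, `j < k`, have total measure less
than `μ(B)`, and remove them from `B`. For the remaining set `W`, `f^{n_k - n_j}(W)` misses `W`,
so the preimages `f^{-n_k}(W)` are pairwise disjoint; in a finite measure space their measures
tend to `0`.
-/

theorem exists_strictMono_forall_frequently {P : ℕ → ℕ → ℕ → Prop}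
    (h : ∀ k m, ∃ᶠ N in atTop, P k m N) :
    ∃ n : ℕ → ℕ, StrictMono n ∧ ∀ k, P k (n k) (n (k + 1)) := by
  have hex : ∀ k m, ∃ N, m < N ∧ P k m N := fun k m =>
    ((h k m).and_eventually (eventually_gt_atTop m)).exists.imp fun _ hN => hN.symm
  choose g hg_gt hg using hex
  let n : ℕ → ℕ := fun k => Nat.rec 0 (fun k m => g k m) k
  exact ⟨n, strictMono_nat_of_lt_succ fun k => hg_gt k (n k), fun k => hg k (n k)⟩

section Growth

variable {a : ℕ → ℝ≥0∞} {c : ℝ≥0∞}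

theorem apply_sub_lt_of_lt_pow_mul (hc0 : c ≠ 0) (hc1 : c ≤ 1)
    (ha : ∀ m d, c ^ m * a d ≤ a (m + d)) {j k N : ℕ} {δ : ℝ≥0∞} (hjk : j ≤ k) (hkN : k ≤ N)
    (hN : a N < c ^ k * δ) : a (N - j) < δ := by
  refine (ENNReal.mul_lt_mul_iff_right (pow_ne_zero k hc0)
    (ENNReal.pow_ne_top (ne_top_of_le_ne_top ENNReal.one_ne_top hc1))).1 ?_
  calc c ^ k * a (N - j) ≤ c ^ j * a (N - j) :=
        mul_le_mul_left (pow_le_pow_of_le_one zero_le hc1 hjk) _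
    _ ≤ a (j + (N - j)) := ha j (N - j)
    _ = a N := by rw [Nat.add_sub_cancel' (hjk.trans hkN)]
    _ < c ^ k * δ := hN

theorem exists_strictMono_tsum_sum_lt (hc0 : c ≠ 0) (hc1 : c ≤ 1)
    (ha : ∀ m d, c ^ m * a d ≤ a (m + d)) (h : liminf a atTop = 0) {ε : ℝ≥0∞} (hε : ε ≠ 0) :
    ∃ n : ℕ → ℕ, StrictMono n ∧
      ∑' k, ∑ j ∈ Finset.range (k + 1), a (n (k + 1) - n j) < ε := by
  obtain ⟨δ, hδ_pos, hδ_sum⟩ := ENNReal.exists_pos_tsum_mul_lt_of_countable hε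
    (fun k : ℕ => (k + 1 : ℝ≥0∞)) fun k => by finiteness
  have hfreq : ∀ k m, ∃ᶠ N in atTop, a N < c ^ m * δ k := fun k m =>
    frequently_lt_of_liminf_lt (by isBoundedDefault)
      (h ▸ ENNReal.mul_pos (pow_ne_zero m hc0) (ENNReal.coe_pos.2 (hδ_pos k)).ne')
  obtain ⟨n, hn, hn_small⟩ := exists_strictMono_forall_frequently hfreq
  refine ⟨n, hn, hδ_sum.trans_le' (ENNReal.tsum_le_tsum fun k => ?_)⟩
  calc ∑ j ∈ Finset.range (k + 1), a (n (k + 1) - n j)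
      ≤ ∑ j ∈ Finset.range (k + 1), (δ k : ℝ≥0∞) := Finset.sum_le_sum fun j hj =>
        (apply_sub_lt_of_lt_pow_mul hc0 hc1 ha (hn.monotone (Finset.mem_range_succ_iff.1 hj))
          (hn.monotone k.le_succ) (hn_small k)).le
    _ = (k + 1) * δ k := by simp

end Growth

section Dynamics

variable {X : Type*} {f : X → X}

theorem disjoint_preimage_iterate_of_disjoint_image_iterate_sub {W : Set X} {i j : ℕ}
    (hij : i ≤ j) (h : Disjoint (f^[j - i] '' W) W) :
    Disjoint (f^[i] ⁻¹' W) (f^[j] ⁻¹' W) := by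
  rw [← Nat.sub_add_cancel hij, iterate_add, preimage_comp]
  exact (disjoint_image_left.1 h).preimage _

variable [MeasurableSpace X] {μ : Measure X}

theorem measurableSet_image_iterate (hfim : ∀ s, MeasurableSet s → MeasurableSet (f '' s))
    (n : ℕ) {s : Set X} (hs : MeasurableSet s) : MeasurableSet (f^[n] '' s) := by
  induction n with
  | zero => simpa
  | succ n ih => rw [iterate_succ', image_comp]; exact hfim _ ih

theorem pow_mul_measure_le_measure_image_iterate
    (hfim : ∀ s, MeasurableSet s → MeasurableSet (f '' s)) {c : ℝ≥0∞}
    (hcf : ∀ s, MeasurableSet s → c * μ s ≤ μ (f '' s)) (n : ℕ) {s : Set X}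
    (hs : MeasurableSet s) : c ^ n * μ s ≤ μ (f^[n] '' s) := by
  induction n with
  | zero => simp
  | succ n ih =>
    calc c ^ (n + 1) * μ s = c * (c ^ n * μ s) := by ring
      _ ≤ c * μ (f^[n] '' s) := by gcongr
      _ ≤ μ (f '' (f^[n] '' s)) := hcf _ (measurableSet_image_iterate hfim n hs)
      _ = μ (f^[n + 1] '' s) := by rw [iterate_succ', image_comp]

theorem tendsto_measure_zero_of_pairwise_disjoint [IsFiniteMeasure μ] {s : ℕ → Set X}
    (hs : ∀ k, MeasurableSet (s k)) (hd : Pairwise (Disjoint on s)) :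
    Tendsto (fun k => μ (s k)) atTop (𝓝 0) := by
  have hsum : ∑' k, μ (s k) ≠ ∞ := by
    rw [← measure_iUnion hd hs]
    finiteness
  simpa [Nat.cofinite_eq_atTop] using ENNReal.tendsto_cofinite_zero_of_tsum_ne_top hsum

theorem liminf_measure_preimage_iterate_eq_zero [IsFiniteMeasure μ] (hf : Measurable f)
    {W : Set X} (hW : MeasurableSet W) {n : ℕ → ℕ} (hn : StrictMono n)
    (hdisj : ∀ j k, j < k → Disjoint (f^[n k - n j] '' W) W) :
    liminf (fun m => μ (f^[m] ⁻¹' W)) atTop = 0 := by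
  have hd : Pairwise (Disjoint on fun k => f^[n k] ⁻¹' W) :=
    (pairwise_disjoint_on _).2 fun j k hjk =>
      disjoint_preimage_iterate_of_disjoint_image_iterate_sub (hn hjk).le (hdisj j k hjk)
  refine le_antisymm ?_ zero_le
  calc liminf (fun m => μ (f^[m] ⁻¹' W)) atTop
      ≤ liminf ((fun m => μ (f^[m] ⁻¹' W)) ∘ n) atTop :=
        hn.tendsto_atTop.liminf_le_liminf_comp
    _ = 0 := (tendsto_measure_zero_of_pairwise_disjoint (fun k => hf.iterate _ hW) hd).liminf_eq

end Dynamics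

theorem exists_subset_liminf_preimage_image_zero_general
    {X : Type*} [MeasurableSpace X] (μ : Measure X)
    [IsFiniteMeasure μ]
    (f : X → X) (hf : Measurable f)
    (hfim : ∀ B : Set X, MeasurableSet B → MeasurableSet (f '' B))
    (c : ℝ≥0∞) (hc : 0 < c)
    (hcf : ∀ B : Set X, MeasurableSet B → c * μ B ≤ μ (f '' B))
    (B : Set X) (hB : MeasurableSet B) (hB0 : 0 < μ B)
    (h : atTop.liminf (fun n : ℕ => μ (f^[n] '' B)) = 0) :
    ∃ W : Set X, W ⊆ B ∧ MeasurableSet W ∧ 0 < μ W ∧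
      atTop.liminf (fun n : ℕ => μ (f^[n] ⁻¹' W)) = 0 ∧
      atTop.liminf (fun n : ℕ => μ (f^[n] '' W)) = 0 := by
  have hcf' : ∀ s, MeasurableSet s → min c 1 * μ s ≤ μ (f '' s) := fun s hs =>
    (mul_le_mul_left (min_le_left c 1) _).trans (hcf s hs)
  have hgrow : ∀ m d, min c 1 ^ m * μ (f^[d] '' B) ≤ μ (f^[m + d] '' B) := fun m d => by
    rw [iterate_add, image_comp]
    exact pow_mul_measure_le_measure_image_iterate hfim hcf' m
      (measurableSet_image_iterate hfim d hB)
  obtain ⟨n, hn, hsum⟩ := exists_strictMono_tsum_sum_lt (lt_min hc one_pos).ne'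
    (min_le_right c 1) hgrow h hB0.ne'
  set R := ⋃ k, ⋃ j ∈ Finset.range (k + 1), f^[n (k + 1) - n j] '' B
  have hR : μ R < μ B := (measure_iUnion_le _).trans_lt
    ((ENNReal.tsum_le_tsum fun k => measure_biUnion_finset_le _ _).trans_lt hsum)
  have hW : MeasurableSet (B \ R) := hB.diff <| .iUnion fun k =>
    Finset.measurableSet_biUnion _ fun j _ => measurableSet_image_iterate hfim _ hB
  refine ⟨B \ R, sdiff_subset, hW, (tsub_pos_of_lt hR).trans_le le_measure_sdiff, ?_, ?_⟩
  · refine liminf_measure_preimage_iterate_eq_zero hf hW hn fun j k hjk => ?_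
    obtain ⟨k, rfl⟩ := Nat.exists_eq_add_one_of_ne_zero (by omega : k ≠ 0)
    refine disjoint_sdiff_right.mono_left ((image_mono sdiff_subset).trans ?_)
    exact subset_iUnion_of_subset k
      (subset_iUnion₂_of_subset j (Finset.mem_range.2 hjk) subset_rfl)
  · exact le_antisymm (h ▸ liminf_le_liminf (.of_forall fun m =>
      measure_mono (image_mono sdiff_subset))) zero_le

/-- **(LY4) ⇒ (LY5) (measure-theoretic form).** Assume `μ` finite. If there is a
measurable `B` with `μ(B) > 0` and `liminf μ(f^n(B)) = 0`, then there is a measurable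
`W ⊆ B` with `μ(W) > 0`, `liminf μ(f^{-n}(W)) = 0` and `liminf μ(f^n(W)) = 0`. -/
theorem exists_subset_liminf_preimage_image_zero
    {X : Type*} [MeasurableSpace X] (μ : Measure X) (hX : μ Set.univ ≠ 0)
    [IsFiniteMeasure μ]
    (f : X → X) (hf : Measurable f)
    (hfim : ∀ B : Set X, MeasurableSet B → MeasurableSet (f '' B))
    (c : ℝ≥0∞) (hc : 0 < c)
    (hcf : ∀ B : Set X, MeasurableSet B → c * μ B ≤ μ (f '' B))
    (B : Set X) (hB : MeasurableSet B) (hB0 : 0 < μ B)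
    (h : atTop.liminf (fun n : ℕ => μ (f^[n] '' B)) = 0) :
    ∃ W : Set X, W ⊆ B ∧ MeasurableSet W ∧ 0 < μ W ∧
      atTop.liminf (fun n : ℕ => μ (f^[n] ⁻¹' W)) = 0 ∧
      atTop.liminf (fun n : ℕ => μ (f^[n] '' W)) = 0 :=
  exists_subset_liminf_preimage_image_zero_general μ f hf hfim c hc hcf B hB hB0 h
end
end
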